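/- arXiv:1906.02903 — 2 statements merged into one kernel-verified Lean document; each statement's English description precedes it below -/
import Mathlib

section
/- Let k_P, k_Q be positive integers and let a, b be real numbers. Then the supremum over nonnegative weights (w_P, w_Q), not both zero, of the ratio ((w_P k_P a + w_Q k_Q b)/(w_P k_P + w_Q k_Q))² / ((w_P² k_P + w_Q² k_Q)/(w_P k_P + w_Q k_Q)²) equals k_P a² + k_Q b² when a and b have the same sign (i.e. ab ≥ 0), and equals max(k_P a², k_Q b²) when ab < 0. -/
/-- Closed form for the signal-to-noise ratio index: the maximum over nonnegative weights
(not both zero) of the squared weighted mean over its "variance" is `k_P a² + k_Q b²`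
when `ab ≥ 0` and `max(k_P a², k_Q b²)` when `ab < 0`. -/
theorem snr_closed_form (kP kQ : ℕ) (hkP : 0 < kP) (hkQ : 0 < kQ) (a b : ℝ) :
    (a * b ≥ 0 →
      IsGreatest {y : ℝ | ∃ wP wQ : ℝ, 0 ≤ wP ∧ 0 ≤ wQ ∧ (wP, wQ) ≠ (0, 0) ∧
          y = ((wP * kP * a + wQ * kQ * b) / (wP * kP + wQ * kQ)) ^ 2
              / ((wP ^ 2 * kP + wQ ^ 2 * kQ) / (wP * kP + wQ * kQ) ^ 2)}
        (kP * a ^ 2 + kQ * b ^ 2)) ∧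
    (a * b < 0 →
      IsGreatest {y : ℝ | ∃ wP wQ : ℝ, 0 ≤ wP ∧ 0 ≤ wQ ∧ (wP, wQ) ≠ (0, 0) ∧
          y = ((wP * kP * a + wQ * kQ * b) / (wP * kP + wQ * kQ)) ^ 2
              / ((wP ^ 2 * kP + wQ ^ 2 * kQ) / (wP * kP + wQ * kQ) ^ 2)}
        (max (kP * a ^ 2) (kQ * b ^ 2))) := by
  have hkP' : (0:ℝ) < (kP:ℝ) := by exact_mod_cast hkP
  have hkQ' : (0:ℝ) < (kQ:ℝ) := by exact_mod_cast hkQ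
  have hVpos : ∀ wP wQ : ℝ, 0 ≤ wP → 0 ≤ wQ → (wP, wQ) ≠ (0, 0) →
      0 < wP ^ 2 * kP + wQ ^ 2 * kQ := by
    intro wP wQ hP hQ hne
    rcases eq_or_lt_of_le hP with h1 | h1
    · rcases eq_or_lt_of_le hQ with h2 | h2
      · exact absurd (by simp [← h1, ← h2]) hne
      · have : 0 < wQ ^ 2 * kQ := by positivity
        nlinarith [sq_nonneg wP]
    · have : 0 < wP ^ 2 * kP := by positivity
      nlinarith [sq_nonneg wQ]
  have key : ∀ wP wQ : ℝ, 0 ≤ wP → 0 ≤ wQ → (wP, wQ) ≠ (0, 0) →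
      ((wP * kP * a + wQ * kQ * b) / (wP * kP + wQ * kQ)) ^ 2
              / ((wP ^ 2 * kP + wQ ^ 2 * kQ) / (wP * kP + wQ * kQ) ^ 2)
      = (wP * kP * a + wQ * kQ * b) ^ 2 / (wP ^ 2 * kP + wQ ^ 2 * kQ) := by
    intro wP wQ hP hQ hne
    have hT : 0 < wP * kP + wQ * kQ := by
      rcases eq_or_lt_of_le hP with h1 | h1
      · rcases eq_or_lt_of_le hQ with h2 | h2
        · exact absurd (by simp [← h1, ← h2]) hne
        · have : 0 < wQ * kQ := mul_pos h2 hkQ'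
          nlinarith [mul_nonneg hP hkP'.le]
      · have : 0 < wP * kP := mul_pos h1 hkP'
        nlinarith [mul_nonneg hQ hkQ'.le]
    have hV := hVpos wP wQ hP hQ hne
    field_simp
  constructor
  · -- same sign case
    intro hab
    constructor
    · -- membership
      by_cases h0 : a = 0 ∧ b = 0
      · refine ⟨1, 0, zero_le_one, le_refl 0, by simp, ?_⟩
        rw [key 1 0 zero_le_one (le_refl 0) (by simp)]
        rw [h0.1, h0.2]
        ring
      · have hne : (|a|, |b|) ≠ (0, 0) := by
          intro h
          apply h0
          have h1 := congrArg Prod.fst h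
          have h2 := congrArg Prod.snd h
          simp at h1 h2
          exact ⟨h1, h2⟩
        refine ⟨|a|, |b|, abs_nonneg a, abs_nonneg b, hne, ?_⟩
        rw [key _ _ (abs_nonneg a) (abs_nonneg b) hne]
        have hV := hVpos _ _ (abs_nonneg a) (abs_nonneg b) hne
        rw [eq_div_iff (ne_of_gt hV)]
        have h1 : |a| * |b| * (a * b) = a ^ 2 * b ^ 2 := by
          rw [← abs_mul, abs_of_nonneg hab]; ring
        have h2 : |a| ^ 2 = a ^ 2 := sq_abs a
        have h3 : |b| ^ 2 = b ^ 2 := sq_abs b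
        linear_combination ((kP:ℝ) * kQ * a ^ 2) * h3 + ((kP:ℝ) * kQ * b ^ 2) * h2
          - 2 * ((kP:ℝ) * kQ) * h1
    · -- upper bound
      rintro y ⟨wP, wQ, hP, hQ, hne, rfl⟩
      rw [key wP wQ hP hQ hne]
      have hV := hVpos wP wQ hP hQ hne
      rw [div_le_iff₀ hV]
      nlinarith [mul_nonneg (mul_nonneg hkP'.le hkQ'.le) (sq_nonneg (a * wQ - b * wP))]
  · -- opposite sign case
    intro hab
    constructor
    · rcases le_total ((kP:ℝ) * a ^ 2) ((kQ:ℝ) * b ^ 2) with hc | hc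
      · rw [max_eq_right hc]
        refine ⟨0, 1, le_refl 0, zero_le_one, by simp, ?_⟩
        rw [key 0 1 (le_refl 0) zero_le_one (by simp)]
        rw [eq_div_iff (ne_of_gt (hVpos 0 1 (le_refl 0) zero_le_one (by simp)))]
        ring
      · rw [max_eq_left hc]
        refine ⟨1, 0, zero_le_one, le_refl 0, by simp, ?_⟩
        rw [key 1 0 zero_le_one (le_refl 0) (by simp)]
        rw [eq_div_iff (ne_of_gt (hVpos 1 0 zero_le_one (le_refl 0) (by simp)))]
        ring
    · rintro y ⟨wP, wQ, hP, hQ, hne, rfl⟩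
      rw [key wP wQ hP hQ hne]
      have hV := hVpos wP wQ hP hQ hne
      rw [div_le_iff₀ hV]
      have h1 : wP * wQ * (a * b) ≤ 0 :=
        mul_nonpos_of_nonneg_of_nonpos (mul_nonneg hP hQ) hab.le
      rcases le_total ((kP:ℝ) * a ^ 2) ((kQ:ℝ) * b ^ 2) with hc | hc
      · rw [max_eq_right hc]
        nlinarith [mul_nonneg hkP'.le (mul_nonneg (sq_nonneg wP) (sub_nonneg.mpr hc)),
          mul_nonneg (mul_nonneg hkP'.le hkQ'.le) (neg_nonneg.mpr h1)]
      · rw [max_eq_left hc]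
        nlinarith [mul_nonneg hkQ'.le (mul_nonneg (sq_nonneg wQ) (sub_nonneg.mpr hc)),
          mul_nonneg (mul_nonneg hkP'.le hkQ'.le) (neg_nonneg.mpr h1)]
end

section
/- Let μ be a probability measure on ℝ^d, let x₁, …, x_m ∈ ℝ^d, and let h : [0,∞) → [0, 1/2] be a function vanishing outside [0,2r] with the balls B(x_k, 2r) pairwise disjoint. Define two regression functions η₊(x) = 1/2 + h(‖x − x_k‖) and η₋(x) = 1/2 − h(‖x − x_k‖) on each ball B(x_k, 2r) (and both equal to 1/2 elsewhere), with corresponding distributions Q₊, Q₋ on ℝ^d × {0,1} sharing the marginal μ. Then for any classifier f : ℝ^d → {0,1} and any index k, the sum of excess risks satisfies E_{Q₊}(f) + E_{Q₋}(f) ≥ 2 ∫_{B(x_k, 2r)} h(‖x − x_k‖) dμ(x). -/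
open MeasureTheory

lemma meas_ne_decide {α : Type*} [MeasurableSpace α] (f : α → Bool) (hf : Measurable f)
    (p : α → Prop) [DecidablePred p] (hp : MeasurableSet {x | p x}) :
    MeasurableSet {x | f x ≠ decide (p x)} := by
  have : {x | f x ≠ decide (p x)} =
      (f ⁻¹' {true} ∩ {x | p x}ᶜ) ∪ (f ⁻¹' {false} ∩ {x | p x}) := by
    ext x
    cases hfx : f x <;> simp [hfx]
  rw [this]
  exact ((hf (MeasurableSet.singleton true)).inter hp.compl).union
    ((hf (MeasurableSet.singleton false)).inter hp)

/-- Assouad-type lower bound: for the pair of distributions with regression functions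
`1/2 ± H` (where `H(x) = Σ_k h(‖x − x_k‖)` is supported on disjoint balls), the sum of
excess risks of any classifier is at least `2 ∫_{B(x_k, 2r)} h(‖x − x_k‖) dμ`. -/
theorem assouad_excess_risk_lower_bound {d m : ℕ}
    (μ : Measure (EuclideanSpace ℝ (Fin d))) [IsProbabilityMeasure μ]
    (r : ℝ) (hr : 0 < r) (xs : Fin m → EuclideanSpace ℝ (Fin d))
    (h : ℝ → ℝ) (hmeas : Measurable h)
    (hh0 : ∀ s : ℝ, 0 ≤ s → 0 ≤ h s ∧ h s ≤ 1/2)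
    (hvanish : ∀ s : ℝ, 2 * r < s → h s = 0)
    (hdisj : ∀ i j : Fin m, i ≠ j →
      Disjoint (Metric.closedBall (xs i) (2*r)) (Metric.closedBall (xs j) (2*r)))
    (f : EuclideanSpace ℝ (Fin d) → Bool) (hf : Measurable f) (k : Fin m) :
    (2 * ∫ x, |(1/2 + ∑ i, h ‖x - xs i‖) - 1/2| *
        (if f x ≠ decide ((1/2 + ∑ i, h ‖x - xs i‖ : ℝ) > 1/2) then 1 else 0) ∂μ) +
    (2 * ∫ x, |(1/2 - ∑ i, h ‖x - xs i‖) - 1/2| *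
        (if f x ≠ decide ((1/2 - ∑ i, h ‖x - xs i‖ : ℝ) > 1/2) then 1 else 0) ∂μ)
      ≥ 2 * ∫ x in Metric.closedBall (xs k) (2*r), h ‖x - xs k‖ ∂μ := by
  set H : EuclideanSpace ℝ (Fin d) → ℝ := fun x => ∑ i, h ‖x - xs i‖ with hH
  have hHmeas : Measurable H :=
    Finset.measurable_sum _ fun i _ => hmeas.comp ((measurable_id.sub_const (xs i)).norm)
  have hHnn : ∀ x, 0 ≤ H x := fun x =>
    Finset.sum_nonneg fun i _ => (hh0 _ (norm_nonneg _)).1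
  have hHbd : ∀ x, |H x| ≤ (m : ℝ) * (1/2) := by
    intro x
    rw [abs_of_nonneg (hHnn x)]
    calc H x ≤ ∑ _i : Fin m, (1/2 : ℝ) :=
          Finset.sum_le_sum fun i _ => (hh0 _ (norm_nonneg _)).2
      _ = (m : ℝ) * (1/2) := by simp [Finset.sum_const, mul_comm]
  have hHint : Integrable H μ := by
    refine (integrable_const ((m : ℝ) * (1/2))).mono' hHmeas.aestronglyMeasurable ?_
    exact Filter.Eventually.of_forall fun x => by simpa using hHbd x
  set Sp : Set (EuclideanSpace ℝ (Fin d)) :=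
    {x | f x ≠ decide ((1/2 + H x : ℝ) > 1/2)} with hSp
  set Sm : Set (EuclideanSpace ℝ (Fin d)) :=
    {x | f x ≠ decide ((1/2 - H x : ℝ) > 1/2)} with hSm
  have hSpm : MeasurableSet Sp := by
    apply meas_ne_decide f hf
    exact measurableSet_lt measurable_const (measurable_const.add hHmeas)
  have hSmm : MeasurableSet Sm := by
    apply meas_ne_decide f hf
    exact measurableSet_lt measurable_const (measurable_const.sub hHmeas)
  have hA : (fun x => |(1/2 + H x) - 1/2| *
      (if f x ≠ decide ((1/2 + H x : ℝ) > 1/2) then 1 else 0)) = Sp.indicator H := by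
    funext x
    by_cases hx : x ∈ Sp
    · simp only [Set.indicator_of_mem hx]
      rw [if_pos (show f x ≠ decide ((1/2 + H x : ℝ) > 1/2) from hx)]
      have : (1/2 + H x) - 1/2 = H x := by ring
      rw [this, abs_of_nonneg (hHnn x), mul_one]
    · simp only [Set.indicator_of_notMem hx]
      rw [if_neg (show ¬ (f x ≠ decide ((1/2 + H x : ℝ) > 1/2)) from hx), mul_zero]
  have hB : (fun x => |(1/2 - H x) - 1/2| *
      (if f x ≠ decide ((1/2 - H x : ℝ) > 1/2) then 1 else 0)) = Sm.indicator H := by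
    funext x
    by_cases hx : x ∈ Sm
    · simp only [Set.indicator_of_mem hx]
      rw [if_pos (show f x ≠ decide ((1/2 - H x : ℝ) > 1/2) from hx)]
      have : |(1/2 - H x) - 1/2| = H x := by
        have : (1/2 - H x) - 1/2 = -(H x) := by ring
        rw [this, abs_neg, abs_of_nonneg (hHnn x)]
      rw [this, mul_one]
    · simp only [Set.indicator_of_notMem hx]
      rw [if_neg (show ¬ (f x ≠ decide ((1/2 - H x : ℝ) > 1/2)) from hx), mul_zero]
  have hAint : Integrable (Sp.indicator H) μ := hHint.indicator hSpm
  have hBint : Integrable (Sm.indicator H) μ := hHint.indicator hSmm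
  have hpoint : ∀ x, H x ≤ Sp.indicator H x + Sm.indicator H x := by
    intro x
    rcases eq_or_lt_of_le (hHnn x) with h0 | h0
    · have hip : Sp.indicator H x = 0 ∨ Sp.indicator H x = H x := by
        by_cases hx : x ∈ Sp
        · right; exact Set.indicator_of_mem hx H
        · left; exact Set.indicator_of_notMem hx H
      have him : Sm.indicator H x = 0 ∨ Sm.indicator H x = H x := by
        by_cases hx : x ∈ Sm
        · right; exact Set.indicator_of_mem hx H
        · left; exact Set.indicator_of_notMem hx H
      rcases hip with hip | hip <;> rcases him with him | him <;>
        simp [hip, him, ← h0]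
    · -- H x > 0 : the two decide conditions are `true` and `false`, so x ∈ Sp ∪ Sm
      have hdp : decide ((1/2 + H x : ℝ) > 1/2) = true := by
        simp only [decide_eq_true_eq]
        linarith
      have hdm : decide ((1/2 - H x : ℝ) > 1/2) = false := by
        simp only [decide_eq_false_iff_not]
        intro hc
        linarith
      cases hfx : f x with
      | true =>
        have hxm : x ∈ Sm := by simp only [hSm, Set.mem_setOf_eq, hfx, hdm]; simp
        have : (0:ℝ) ≤ Sp.indicator H x := Set.indicator_nonneg (fun y _ => hHnn y) x
        rw [Set.indicator_of_mem hxm]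
        linarith
      | false =>
        have hxp : x ∈ Sp := by simp only [hSp, Set.mem_setOf_eq, hfx, hdp]; simp
        have : (0:ℝ) ≤ Sm.indicator H x := Set.indicator_nonneg (fun y _ => hHnn y) x
        rw [Set.indicator_of_mem hxp]
        linarith
  have step1 : ∫ x, H x ∂μ ≤
      (∫ x, Sp.indicator H x ∂μ) + ∫ x, Sm.indicator H x ∂μ := by
    rw [← integral_add hAint hBint]
    exact integral_mono hHint (hAint.add hBint) hpoint
  have step2 : ∫ x in Metric.closedBall (xs k) (2*r), H x ∂μ ≤ ∫ x, H x ∂μ :=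
    setIntegral_le_integral hHint (Filter.Eventually.of_forall fun x => hHnn x)
  have step3 : ∫ x in Metric.closedBall (xs k) (2*r), h ‖x - xs k‖ ∂μ
      = ∫ x in Metric.closedBall (xs k) (2*r), H x ∂μ := by
    refine setIntegral_congr_fun (measurableSet_closedBall) ?_
    intro x hx
    show h ‖x - xs k‖ = ∑ i : Fin m, h ‖x - xs i‖
    refine (Finset.sum_eq_single (f := fun i => h ‖x - xs i‖) (s := Finset.univ) k ?_ ?_).symm
    · intro i _ hik
      apply hvanish
      have hxnot : x ∉ Metric.closedBall (xs i) (2*r) := by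
        intro hxi
        exact (hdisj i k hik).ne_of_mem hxi hx rfl
      rw [Metric.mem_closedBall, not_le] at hxnot
      rwa [← dist_eq_norm]
    · intro hk; exact absurd (Finset.mem_univ k) hk
  have key : ∫ x in Metric.closedBall (xs k) (2*r), h ‖x - xs k‖ ∂μ ≤
      (∫ x, Sp.indicator H x ∂μ) + ∫ x, Sm.indicator H x ∂μ := by
    rw [step3]; exact le_trans step2 step1
  calc 2 * ∫ x in Metric.closedBall (xs k) (2*r), h ‖x - xs k‖ ∂μ
      ≤ 2 * ((∫ x, Sp.indicator H x ∂μ) + ∫ x, Sm.indicator H x ∂μ) := by linarith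
    _ = 2 * (∫ x, Sp.indicator H x ∂μ) + 2 * ∫ x, Sm.indicator H x ∂μ := by ring
    _ = _ := by rw [← hA, ← hB]
end
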